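/- Let u = (u₀,u₁,u₂) ∈ ℝ³ be a nonzero vector satisfying the Bogomolov inequality 2·u₀·u₂ ≤ u₁². Let P = (1,s,q) and P' = (1,s',q') be vectors with q > s²/2 and q' > s'²/2, and suppose there exists a vector R = (1,t,r) with r > t²/2 such that R lies in the 2-dimensional span of {u, P} and also in the span of {u, P'}. Then span_ℝ{u, P} = span_ℝ{u, P'}. In other words, two potential walls of u do not intersect in the region strictly above the parabola q = s²/2 unless they are identical. -/
import Mathlib

lemma wall_span_eq (u : Fin 3 → ℝ) (hBog : 2 * u 0 * u 2 ≤ (u 1) ^ 2)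
    (s q t r : ℝ) (hr : r > t ^ 2 / 2)
    (hR : ![1, t, r] ∈ Submodule.span ℝ ({u, ![1, s, q]} : Set (Fin 3 → ℝ))) :
    Submodule.span ℝ ({u, ![1, s, q]} : Set (Fin 3 → ℝ)) =
      Submodule.span ℝ ({u, ![1, t, r]} : Set (Fin 3 → ℝ)) := by
  obtain ⟨a, b, hab⟩ := Submodule.mem_span_pair.mp hR
  have h0 := congrFun hab 0
  have h1 := congrFun hab 1
  have h2 := congrFun hab 2
  simp [Matrix.cons_val_zero, Matrix.cons_val_one] at h0 h1 h2
  by_cases hb : b = 0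
  · subst hb
    simp at h0 h1 h2
    have e1 : 2 * r = a ^ 2 * (2 * u 0 * u 2) := by linear_combination (-2*a*u 2)*h0 + (-2)*h2
    have e2 : t ^ 2 = a ^ 2 * (u 1 ^ 2) := by linear_combination (-(t + a*u 1))*h1
    have h := mul_le_mul_of_nonneg_left hBog (sq_nonneg a)
    linarith
  · -- P = (1/b) • R - (a/b) • u
    have hP : ![1, s, q] = (-(a/b)) • u + (1/b) • (![1, t, r] : Fin 3 → ℝ) := by
      rw [← hab]
      match_scalars <;> first | (field_simp; try ring) | ring
    apply le_antisymm <;>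
        rw [Submodule.span_le, Set.insert_subset_iff, Set.singleton_subset_iff] <;>
      constructor
    · exact Submodule.subset_span (Set.mem_insert _ _)
    · rw [hP]
      exact Submodule.add_mem _
        (Submodule.smul_mem _ _ (Submodule.subset_span (Set.mem_insert _ _)))
        (Submodule.smul_mem _ _ (Submodule.subset_span (Set.mem_insert_of_mem _ rfl)))
    · exact Submodule.subset_span (Set.mem_insert _ _)
    · exact hR

/-- Lemma 1.3, second statement: two potential walls of a character `u` satisfying the
Bogomolov inequality `2·u₀·u₂ ≤ u₁²` do not intersect in the region strictly above the
parabola `q = s²/2`, unless they are identical.  Here the wall of `u` through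
`P = (1,s,q)` is the plane `span ℝ {u, P}`. -/
theorem potential_walls_do_not_intersect
    (u : Fin 3 → ℝ) (hu : u ≠ 0) (hBog : 2 * u 0 * u 2 ≤ (u 1) ^ 2)
    (s q s' q' : ℝ) (hq : q > s ^ 2 / 2) (hq' : q' > s' ^ 2 / 2)
    (t r : ℝ) (hr : r > t ^ 2 / 2)
    (hR : ![1, t, r] ∈ Submodule.span ℝ ({u, ![1, s, q]} : Set (Fin 3 → ℝ)))
    (hR' : ![1, t, r] ∈ Submodule.span ℝ ({u, ![1, s', q']} : Set (Fin 3 → ℝ))) :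
    Submodule.span ℝ ({u, ![1, s, q]} : Set (Fin 3 → ℝ)) =
      Submodule.span ℝ ({u, ![1, s', q']} : Set (Fin 3 → ℝ)) := by
  rw [wall_span_eq u hBog s q t r hr hR, wall_span_eq u hBog s' q' t r hr hR']
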